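/- arXiv:2205.03914 — 6 statements merged into one kernel-verified Lean document; each statement's English description precedes it below -/
import Mathlib

section
/- There exist vectors x_1, x_2 ∈ ℝ^d and an unbiased compression operator C in B^d(ω) (namely Rand-1 sparsification) such that the inequality E[‖(1/2)(C(x_1)+C(x_2))‖²] − E[‖C((x_1+x_2)/2)‖²] ≤ G fails for every fixed constant G, by taking x_2 = −x_1 = t·(1,…,1)ᵀ with t → ∞. Concretely: for the Rand-1 compressor on ℝ^d with d ≥ 2, and x_2 = −x_1 = t·(1,…,1)ᵀ, the quantity E[‖(1/2)(C(x_1)+C(x_2))‖²] grows without bound as t → ∞ while C((x_1+x_2)/2) = 0. -/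
/-!
For `x₂ = -x₁ = t • 𝟙` the two compressed vectors are `-d t • e_{s₁}` and `d t • e_{s₂}`, so
their average has squared norm `(d t)² / 2` whenever `s₁ ≠ s₂`. Averaging over the `d²`
coordinate pairs gives `d (d - 1) t² / 2`, quadratic in `t`, whereas `(x₁ + x₂) / 2 = 0` is
compressed to `0`.
-/

variable {ι : Type*} [Fintype ι] [DecidableEq ι]

theorem EuclideanSpace.norm_single_sub_single_sq (i j : ι) :
    ‖EuclideanSpace.single j (1 : ℝ) - EuclideanSpace.single i 1‖ ^ 2
      = if i = j then 0 else 2 := by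
  split_ifs with h
  · simp [h]
  · rw [@norm_sub_sq_real, EuclideanSpace.inner_single_left]
    simp [PiLp.norm_single, Ne.symm h]
    norm_num

theorem Fintype.sum_sum_ite_eq_zero_else_const (c : ℝ) :
    ∑ i : ι, ∑ j : ι, (if i = j then 0 else c)
      = Fintype.card ι * (Fintype.card ι - 1) * c := by
  have h (i j : ι) : (if i = j then 0 else c) = c - if i = j then c else 0 := by
    split_ifs <;> ring
  simp only [h, Finset.sum_sub_distrib, Finset.sum_ite_eq, Finset.mem_univ, if_true,
    Finset.sum_const, Finset.card_univ, nsmul_eq_mul]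
  ring

namespace EuclideanSpace

/-- Rand-1 sparsification with the random coordinate `s` as an explicit argument; expectations
over the uniform choice of `s` are written as averages over `s`. -/
noncomputable def randOne (x : EuclideanSpace ℝ ι) (s : ι) : EuclideanSpace ℝ ι :=
  (Fintype.card ι : ℝ) • x s • single s 1

theorem half_randOne_neg_add_randOne_smul_one (t : ℝ) (s₁ s₂ : ι) :
    (1 / 2 : ℝ) • (randOne ((-t) • (equiv ι ℝ).symm fun _ => 1) s₁
        + randOne (t • (equiv ι ℝ).symm fun _ => 1) s₂)
      = (Fintype.card ι * t / 2) • (single s₂ 1 - single s₁ 1) := by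
  simp only [randOne, PiLp.smul_apply, PiLp.continuousLinearEquiv_symm_apply, smul_eq_mul,
    mul_one]
  module

theorem sum_norm_half_randOne_neg_add_randOne_sq (t : ℝ) :
    (1 / (Fintype.card ι : ℝ) ^ 2) * ∑ s₁ : ι, ∑ s₂ : ι,
        ‖(1 / 2 : ℝ) • (randOne ((-t) • (equiv ι ℝ).symm fun _ => 1) s₁
          + randOne (t • (equiv ι ℝ).symm fun _ => 1) s₂)‖ ^ 2
      = Fintype.card ι * (Fintype.card ι - 1) * t ^ 2 / 2 := by
  simp only [half_randOne_neg_add_randOne_smul_one, norm_smul, mul_pow,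
    norm_single_sub_single_sq, mul_ite, mul_zero, Fintype.sum_sum_ite_eq_zero_else_const,
    Real.norm_eq_abs, sq_abs]
  rcases (Fintype.card ι).eq_zero_or_pos with h | h
  · simp [h]
  · field_simp

end EuclideanSpace

/-- Counterexample: for the Rand-1 sparsification compressor
`C(x) = d · x_s · e_s` (with `s` uniform on `{1,…,d}`), taking `x₂ = −x₁ = t·(1,…,1)ᵀ`,
the quantity `E[‖(1/2)(C(x₁)+C(x₂))‖²]` (the compressors applied to `x₁` and `x₂`
using independent coordinates) exceeds any constant `G` for `t` large enough,
while `C((x₁+x₂)/2) = 0`. -/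
theorem stmt_3 (d : ℕ) (hd : 2 ≤ d)
    (C : EuclideanSpace ℝ (Fin d) → Fin d → EuclideanSpace ℝ (Fin d))
    (hC : ∀ x s, C x s = (d : ℝ) • (x s) • EuclideanSpace.single s (1 : ℝ)) :
    ∀ G : ℝ, ∃ t : ℝ, 0 < t ∧
      ∀ x₁ x₂ : EuclideanSpace ℝ (Fin d),
        x₁ = (-t) • (EuclideanSpace.equiv (Fin d) ℝ).symm (fun _ => (1 : ℝ)) →
        x₂ = t • (EuclideanSpace.equiv (Fin d) ℝ).symm (fun _ => (1 : ℝ)) →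
        (G < (1 / (d : ℝ) ^ 2) * ∑ s₁ : Fin d, ∑ s₂ : Fin d,
            ‖(1 / 2 : ℝ) • (C x₁ s₁ + C x₂ s₂)‖ ^ 2
          ∧ ∀ s, C ((1 / 2 : ℝ) • (x₁ + x₂)) s = 0) := by
  obtain rfl : C = EuclideanSpace.randOne := by
    funext x s
    rw [hC, EuclideanSpace.randOne, Fintype.card_fin]
  intro G
  refine ⟨|G| + 1, by positivity, fun x₁ x₂ hx₁ hx₂ => ⟨?_, fun s => ?_⟩⟩
  · have hd' : (1 : ℝ) ≤ d * (d - 1) / 2 := by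
      have : (2 : ℝ) ≤ d := by exact_mod_cast hd
      nlinarith
    have hsum := EuclideanSpace.sum_norm_half_randOne_neg_add_randOne_sq (ι := Fin d) (|G| + 1)
    rw [Fintype.card_fin] at hsum
    rw [hx₁, hx₂, hsum]
    calc G < (|G| + 1) ^ 2 := by nlinarith [le_abs_self G, abs_nonneg G]
      _ ≤ d * (d - 1) / 2 * (|G| + 1) ^ 2 := le_mul_of_one_le_left (by positivity) hd'
      _ = _ := by ring
  · have hx : x₁ + x₂ = 0 := by rw [hx₁, hx₂, neg_smul, neg_add_cancel]
    simp [hx, EuclideanSpace.randOne]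
end

section
/- Let random vectors h_{t,m}, x^n_{t,m} ∈ ℝ^d be given, let C be an unbiased compressor with E[‖C(y)‖²] ≤ (ω+1)‖y‖², let 0 < α ≤ 1/(ω+1), let q_{t,m} = C(x^n_{t,m} − h_{t,m}) and h_{t+1,m} = h_{t,m} + α q_{t,m}. Then for any fixed vector x^n_{*,m}, E[‖h_{t+1,m} − x^n_{*,m}‖² | x^n_{t,m}, h_{t,m}] ≤ (1−α)‖h_{t,m} − x^n_{*,m}‖² + α‖x^n_{t,m} − x^n_{*,m}‖². -/
open MeasureTheory

/-!
Write `a = h - x_*` and `b = x - h`, so that `h⁺ - x_* = a + α q` with `E q = b`. Expanding the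
square, `E‖a + α q‖² = ‖a‖² + 2α⟪a, b⟫ + α² E‖q‖²`, and the moment bound together with
`α (ω + 1) ≤ 1` gives `α² E‖q‖² ≤ α ‖b‖²`. The result is exactly
`‖a‖² + 2α⟪a, b⟫ + α‖b‖² = (1 - α)‖a‖² + α‖a + b‖²`.
-/

section

variable {Ω E : Type*} [MeasurableSpace Ω] {P : Measure Ω} [IsProbabilityMeasure P]
  [NormedAddCommGroup E] [InnerProductSpace ℝ E] [CompleteSpace E]

theorem integral_norm_add_smul_sq {c : Ω → E} (hc : Integrable c P)
    (hc2 : Integrable (fun s => ‖c s‖ ^ 2) P) (a : E) (α : ℝ) :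
    ∫ s, ‖a + α • c s‖ ^ 2 ∂P
      = ‖a‖ ^ 2 + 2 * α * inner ℝ a (∫ s, c s ∂P) + α ^ 2 * ∫ s, ‖c s‖ ^ 2 ∂P := by
  have hexpand : ∀ s, ‖a + α • c s‖ ^ 2
      = ‖a‖ ^ 2 + (2 * α * inner ℝ a (c s) + α ^ 2 * ‖c s‖ ^ 2) := by
    intro s
    rw [norm_add_sq_real, real_inner_smul_right, norm_smul, mul_pow, Real.norm_eq_abs, sq_abs]
    ring
  have hinner : Integrable (fun s => 2 * α * inner ℝ a (c s)) P :=
    ((innerSL ℝ a).integrable_comp hc).const_mul _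
  have hsq : Integrable (fun s => α ^ 2 * ‖c s‖ ^ 2) P := hc2.const_mul _
  have hrest : Integrable (fun s => 2 * α * inner ℝ a (c s) + α ^ 2 * ‖c s‖ ^ 2) P :=
    hinner.add hsq
  simp_rw [hexpand]
  rw [integral_add (integrable_const _) hrest, integral_add hinner hsq,
    integral_const_mul, integral_const_mul, integral_inner hc, integral_const, probReal_univ,
    one_smul, add_assoc]

theorem integral_norm_add_smul_sq_le {c : Ω → E} {b : E} {ω α : ℝ} (hc : Integrable c P)
    (hc2 : Integrable (fun s => ‖c s‖ ^ 2) P) (hmean : ∫ s, c s ∂P = b)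
    (hmoment : ∫ s, ‖c s‖ ^ 2 ∂P ≤ (ω + 1) * ‖b‖ ^ 2)
    (hα0 : 0 ≤ α) (hαω : α * (ω + 1) ≤ 1) (a : E) :
    ∫ s, ‖a + α • c s‖ ^ 2 ∂P ≤ (1 - α) * ‖a‖ ^ 2 + α * ‖a + b‖ ^ 2 := by
  have hvar : α ^ 2 * ∫ s, ‖c s‖ ^ 2 ∂P ≤ α * ‖b‖ ^ 2 :=
    calc α ^ 2 * ∫ s, ‖c s‖ ^ 2 ∂P
        ≤ α ^ 2 * ((ω + 1) * ‖b‖ ^ 2) := by gcongr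
      _ = α * (α * (ω + 1)) * ‖b‖ ^ 2 := by ring
      _ ≤ α * 1 * ‖b‖ ^ 2 := by gcongr
      _ = α * ‖b‖ ^ 2 := by ring
  rw [integral_norm_add_smul_sq hc hc2, hmean, norm_add_sq_real]
  linarith

end

theorem stmt_7_general {d : ℕ} {Ω : Type*} [MeasurableSpace Ω] (P : Measure Ω)
    [IsProbabilityMeasure P] (ω : ℝ)
    (C : EuclideanSpace ℝ (Fin d) → Ω → EuclideanSpace ℝ (Fin d))
    (hint : ∀ y, Integrable (fun s => C y s) P)
    (hint2 : ∀ y, Integrable (fun s => ‖C y s‖ ^ 2) P)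
    (hunbiased : ∀ y, ∫ s, C y s ∂P = y)
    (hmoment : ∀ y, ∫ s, ‖C y s‖ ^ 2 ∂P ≤ (ω + 1) * ‖y‖ ^ 2)
    (α : ℝ) (hα0 : 0 < α) (hα : α ≤ 1 / (ω + 1))
    (x h xstar : EuclideanSpace ℝ (Fin d)) :
    ∫ s, ‖(h + α • C (x - h) s) - xstar‖ ^ 2 ∂P
      ≤ (1 - α) * ‖h - xstar‖ ^ 2 + α * ‖x - xstar‖ ^ 2 := by
  have hω : 0 < ω + 1 := one_div_pos.mp (hα0.trans_le hα)
  have hαω : α * (ω + 1) ≤ 1 := (le_div_iff₀ hω).mp hα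
  have hshift : ∀ s, (h + α • C (x - h) s) - xstar = (h - xstar) + α • C (x - h) s := fun s => by
    abel
  have hsum : (h - xstar) + (x - h) = x - xstar := by abel
  simp_rw [hshift]
  simpa only [hsum] using integral_norm_add_smul_sq_le (hint (x - h)) (hint2 _) (hunbiased _)
    (hmoment _) hα0.le hαω (h - xstar)

/-- Shift-learning lemma (Lemma 3): with `q = C(x − h)` and `h⁺ = h + α q` for an unbiased
compressor `C ∈ B^d(ω)` and `0 < α ≤ 1/(ω+1)`,
`E[‖h⁺ − x_*‖²] ≤ (1−α)‖h − x_*‖² + α‖x − x_*‖²`. -/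
theorem stmt_7 {d : ℕ} {Ω : Type*} [MeasurableSpace Ω] (P : Measure Ω)
    [IsProbabilityMeasure P] (ω : ℝ) (hω : 0 ≤ ω)
    (C : EuclideanSpace ℝ (Fin d) → Ω → EuclideanSpace ℝ (Fin d))
    (hint : ∀ y, Integrable (fun s => C y s) P)
    (hint2 : ∀ y, Integrable (fun s => ‖C y s‖ ^ 2) P)
    (hunbiased : ∀ y, ∫ s, C y s ∂P = y)
    (hmoment : ∀ y, ∫ s, ‖C y s‖ ^ 2 ∂P ≤ (ω + 1) * ‖y‖ ^ 2)
    (α : ℝ) (hα0 : 0 < α) (hα : α ≤ 1 / (ω + 1))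
    (x h xstar : EuclideanSpace ℝ (Fin d)) :
    ∫ s, ‖(h + α • C (x - h) s) - xstar‖ ^ 2 ∂P
      ≤ (1 - α) * ‖h - xstar‖ ^ 2 + α * ‖x - xstar‖ ^ 2 :=
  stmt_7_general P ω C hint hint2 hunbiased hmoment α hα0 hα x h xstar
end

section
/- Let x_t, x_* ∈ ℝ^d, η ∈ [0,1], and let x^n_{t,1},…,x^n_{t,M}, h_{t,1},…,h_{t,M}, x^n_{*,1},…,x^n_{*,M} ∈ ℝ^d be vectors with (1/M)Σ_m x^n_{*,m} = x_*. Let C_1,…,C_M be independent unbiased compressors with variance parameter ω, and set x_{t+1} = (1−η)x_t + η(1/M)Σ_{m=1}^M (C_m(x^n_{t,m} − h_{t,m}) + h_{t,m}). Then E[‖x_{t+1} − x_*‖² | x_t, (h_{t,m}), (x^n_{t,m})] ≤ (η²ω/M²)Σ_{m=1}^M ‖x^n_{t,m} − h_{t,m}‖² + (1−η)‖x_t − x_*‖² + (η/M)Σ_{m=1}^M ‖x^n_{t,m} − x^n_{*,m}‖². -/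
open MeasureTheory ProbabilityTheory

/-!
Set `y m = x^n_{t,m} - h_{t,m}` and `W m = C m (y m) - y m`. Using the averaging condition,
`x_{t+1} - x_*` is the deterministic vector `(1 - η)(x_t - x_*) + η · avg_m (x^n_{t,m} - x^n_{*,m})`
plus the centred noise `(η / M) ∑ W m`, so its second moment splits into the two parts. The `W m`
are independent and centred, hence orthogonal in `L²`, so the noise contributes
`(η / M)² ∑ E‖W m‖² ≤ (η² ω / M²) ∑ ‖y m‖²`; the deterministic part is bounded by convexity of
`‖·‖²`, applied once to the convex combination and once to the average.
-/

section Convexity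

variable {E : Type*} [NormedAddCommGroup E] [NormedSpace ℝ E]

lemma convexOn_univ_norm_sq : ConvexOn ℝ Set.univ (fun x : E => ‖x‖ ^ 2) :=
  convexOn_univ_norm.pow (fun x _ => norm_nonneg x) 2

lemma norm_sq_smul_add_smul_le {η : ℝ} (hη0 : 0 ≤ η) (hη1 : η ≤ 1) (a b : E) :
    ‖(1 - η) • a + η • b‖ ^ 2 ≤ (1 - η) * ‖a‖ ^ 2 + η * ‖b‖ ^ 2 :=
  convexOn_univ_norm_sq.2 trivial trivial (by linarith) hη0 (by ring)

lemma norm_sq_average_le {ι : Type*} [Fintype ι] (z : ι → E) :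
    ‖(1 / (Fintype.card ι : ℝ)) • ∑ i, z i‖ ^ 2
      ≤ (1 / (Fintype.card ι : ℝ)) * ∑ i, ‖z i‖ ^ 2 := by
  rcases isEmpty_or_nonempty ι with hι | hι
  · simp
  have hcard : (0 : ℝ) < Fintype.card ι := by exact_mod_cast Fintype.card_pos
  simpa [Finset.smul_sum, Finset.mul_sum] using
    convexOn_univ_norm_sq.map_sum_le (t := Finset.univ) (w := fun _ => 1 / (Fintype.card ι : ℝ))
      (p := z) (fun _ _ => by positivity) (by simp [hcard.ne']) (fun _ _ => trivial)

end Convexity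

section SecondMoments

variable {Ω E : Type*} {mΩ : MeasurableSpace Ω} {μ : Measure Ω}
  [NormedAddCommGroup E] [InnerProductSpace ℝ E]

lemma MeasureTheory.MemLp.integrable_inner {f g : Ω → E} (hf : MemLp f 2 μ) (hg : MemLp g 2 μ) :
    Integrable (fun ω => inner ℝ (f ω) (g ω)) μ :=
  (L2.integrable_inner (hf.toLp f) (hg.toLp g)).congr <| by
    filter_upwards [hf.coeFn_toLp, hg.coeFn_toLp] with ω hfω hgω
    rw [hfω, hgω]

variable [CompleteSpace E]

lemma integral_norm_add_sq_of_integral_eq_zero [IsProbabilityMeasure μ] (a : E) {X : Ω → E}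
    (hX : MemLp X 2 μ) (hX0 : μ[X] = 0) :
    ∫ ω, ‖a + X ω‖ ^ 2 ∂μ = ‖a‖ ^ 2 + ∫ ω, ‖X ω‖ ^ 2 ∂μ := by
  have hX1 : Integrable X μ := hX.integrable one_le_two
  have hXsq : Integrable (fun ω => ‖X ω‖ ^ 2) μ := (memLp_two_iff_integrable_sq_norm hX.1).1 hX
  simp_rw [norm_add_sq_real]
  have hcross : Integrable (fun ω => 2 * inner ℝ a (X ω)) μ := (hX1.const_inner a).const_mul 2
  have hlin : Integrable (fun ω => ‖a‖ ^ 2 + 2 * inner ℝ a (X ω)) μ :=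
    (integrable_const _).add hcross
  rw [integral_add hlin hXsq, integral_add (integrable_const _) hcross,
    integral_const_mul, integral_inner hX1, hX0]
  simp

variable [MeasurableSpace E] [BorelSpace E]

lemma ProbabilityTheory.IndepFun.integral_inner_eq_inner_integral {X Y : Ω → E}
    (hXY : IndepFun X Y μ) (hX : Integrable X μ) (hY : Integrable Y μ) :
    ∫ ω, inner ℝ (X ω) (Y ω) ∂μ = inner ℝ μ[X] μ[Y] :=
  hXY.integral_bilin hX hY (innerSL ℝ)

lemma integral_norm_sum_sq_of_iIndepFun [IsFiniteMeasure μ] {ι : Type*} [Fintype ι]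
    {W : ι → Ω → E} (hW : iIndepFun W μ) (hW2 : ∀ i, MemLp (W i) 2 μ) (hW0 : ∀ i, μ[W i] = 0) :
    ∫ ω, ‖∑ i, W i ω‖ ^ 2 ∂μ = ∑ i, ∫ ω, ‖W i ω‖ ^ 2 ∂μ := by
  have hcross : ∀ i j, i ≠ j → ∫ ω, inner ℝ (W i ω) (W j ω) ∂μ = 0 := fun i j hij => by
    rw [(hW.indepFun hij).integral_inner_eq_inner_integral ((hW2 i).integrable one_le_two)
      ((hW2 j).integrable one_le_two), hW0 i, inner_zero_left]
  simp_rw [← real_inner_self_eq_norm_sq, sum_inner, inner_sum]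
  rw [integral_finsetSum _ fun i _ =>
    integrable_finsetSum _ fun j _ => (hW2 i).integrable_inner (hW2 j)]
  refine Finset.sum_congr rfl fun i _ => ?_
  rw [integral_finsetSum _ fun j _ => (hW2 i).integrable_inner (hW2 j)]
  exact Finset.sum_eq_single i (fun j _ hji => hcross i j hji.symm) (by simp)

end SecondMoments

theorem stmt_9_general {d M : ℕ} {Ω : Type*} [MeasurableSpace Ω] (P : Measure Ω)
    [IsProbabilityMeasure P] (ω : ℝ)
    (C : Fin M → EuclideanSpace ℝ (Fin d) → Ω → EuclideanSpace ℝ (Fin d))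
    (hint : ∀ m y, Integrable (fun s => C m y s) P)
    (hint2 : ∀ m y, Integrable (fun s => ‖C m y s‖ ^ 2) P)
    (hunbiased : ∀ m y, ∫ s, C m y s ∂P = y)
    (hvar : ∀ m y, ∫ s, ‖C m y s - y‖ ^ 2 ∂P ≤ ω * ‖y‖ ^ 2)
    (η : ℝ) (hη0 : 0 ≤ η) (hη1 : η ≤ 1)
    (xt xstar : EuclideanSpace ℝ (Fin d))
    (xn h xnstar : Fin M → EuclideanSpace ℝ (Fin d))
    (havg : (1 / (M : ℝ)) • (∑ m : Fin M, xnstar m) = xstar)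
    (hindep : iIndepFun (m := fun _ : Fin M => (inferInstance :
        MeasurableSpace (EuclideanSpace ℝ (Fin d))))
      (fun m s => C m (xn m - h m) s) P) :
    ∫ s, ‖((1 - η) • xt +
          η • ((1 / (M : ℝ)) • (∑ m : Fin M, (C m (xn m - h m) s + h m)))) - xstar‖ ^ 2 ∂P
      ≤ (η ^ 2 * ω / (M : ℝ) ^ 2) * ∑ m : Fin M, ‖xn m - h m‖ ^ 2
        + (1 - η) * ‖xt - xstar‖ ^ 2
        + (η / (M : ℝ)) * ∑ m : Fin M, ‖xn m - xnstar m‖ ^ 2 := by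
  set y := fun m => xn m - h m
  set W := fun m s => C m (y m) s - y m
  have hW2 (m : Fin M) : MemLp (W m) 2 P :=
    ((memLp_two_iff_integrable_sq_norm (hint m (y m)).1).2 (hint2 m (y m))).sub (memLp_const _)
  have hW0 (m : Fin M) : P[W m] = 0 := by
    simp [W, integral_sub (hint m (y m)) (integrable_const _), hunbiased]
  have hWindep : iIndepFun W P :=
    hindep.comp (fun m v => v - y m) fun m => measurable_id.sub_const _
  set a := (1 - η) • (xt - xstar) + η • ((1 / (M : ℝ)) • ∑ m, (xn m - xnstar m))
  have hdecomp (s : Ω) : ((1 - η) • xt +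
      η • ((1 / (M : ℝ)) • (∑ m, (C m (xn m - h m) s + h m)))) - xstar
        = a + (η / M) • ∑ m, W m s := by
    simp only [a, W, y, ← havg, Finset.sum_add_distrib, Finset.sum_sub_distrib]
    module
  have hS2 : MemLp (fun s => (η / M) • ∑ m, W m s) 2 P :=
    (memLp_finsetSum _ fun m _ => hW2 m).const_smul (η / M)
  have hS0 : ∫ s, (η / M) • ∑ m, W m s ∂P = 0 := by
    simp [integral_smul, integral_finsetSum _ fun m _ => (hW2 m).integrable one_le_two, hW0]
  calc _ = ‖a‖ ^ 2 + ∫ s, ‖(η / M) • ∑ m, W m s‖ ^ 2 ∂P := by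
        simp_rw [hdecomp]; exact integral_norm_add_sq_of_integral_eq_zero a hS2 hS0
    _ = ‖a‖ ^ 2 + (η / M) ^ 2 * ∑ m, ∫ s, ‖W m s‖ ^ 2 ∂P := by
        simp_rw [norm_smul, mul_pow, Real.norm_eq_abs, sq_abs]
        rw [integral_const_mul, integral_norm_sum_sq_of_iIndepFun hWindep hW2 hW0]
    _ ≤ ((1 - η) * ‖xt - xstar‖ ^ 2 + η * ((1 / M) * ∑ m, ‖xn m - xnstar m‖ ^ 2))
          + (η / M) ^ 2 * ∑ m, ω * ‖y m‖ ^ 2 := by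
        gcongr ?_ + _ * ?_
        · refine (norm_sq_smul_add_smul_le hη0 hη1 _ _).trans ?_
          gcongr
          simpa using norm_sq_average_le fun m => xn m - xnstar m
        · exact Finset.sum_le_sum fun m _ => hvar m (y m)
    _ = _ := by rw [← Finset.mul_sum]; ring

/-- Lemma 2: for the aggregation step
`x_{t+1} = (1−η)x_t + η(1/M)Σ_m (C_m(x^n_{t,m} − h_{t,m}) + h_{t,m})` with independent
unbiased compressors of variance parameter `ω`, and `(1/M)Σ_m x^n_{*,m} = x_*`,
`E[‖x_{t+1} − x_*‖²] ≤ (η²ω/M²)Σ_m ‖x^n_{t,m} − h_{t,m}‖² + (1−η)‖x_t − x_*‖²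
  + (η/M)Σ_m ‖x^n_{t,m} − x^n_{*,m}‖²`. -/
theorem stmt_9 {d M : ℕ} (hM : 0 < M) {Ω : Type*} [MeasurableSpace Ω] (P : Measure Ω)
    [IsProbabilityMeasure P] (ω : ℝ) (hω : 0 ≤ ω)
    (C : Fin M → EuclideanSpace ℝ (Fin d) → Ω → EuclideanSpace ℝ (Fin d))
    (hint : ∀ m y, Integrable (fun s => C m y s) P)
    (hint2 : ∀ m y, Integrable (fun s => ‖C m y s‖ ^ 2) P)
    (hunbiased : ∀ m y, ∫ s, C m y s ∂P = y)
    (hvar : ∀ m y, ∫ s, ‖C m y s - y‖ ^ 2 ∂P ≤ ω * ‖y‖ ^ 2)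
    (η : ℝ) (hη0 : 0 ≤ η) (hη1 : η ≤ 1)
    (xt xstar : EuclideanSpace ℝ (Fin d))
    (xn h xnstar : Fin M → EuclideanSpace ℝ (Fin d))
    (havg : (1 / (M : ℝ)) • (∑ m : Fin M, xnstar m) = xstar)
    (hindep : iIndepFun (m := fun _ : Fin M => (inferInstance :
        MeasurableSpace (EuclideanSpace ℝ (Fin d))))
      (fun m s => C m (xn m - h m) s) P) :
    ∫ s, ‖((1 - η) • xt +
          η • ((1 / (M : ℝ)) • (∑ m : Fin M, (C m (xn m - h m) s + h m)))) - xstar‖ ^ 2 ∂P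
      ≤ (η ^ 2 * ω / (M : ℝ) ^ 2) * ∑ m : Fin M, ‖xn m - h m‖ ^ 2
        + (1 - η) * ‖xt - xstar‖ ^ 2
        + (η / (M : ℝ)) * ∑ m : Fin M, ‖xn m - xnstar m‖ ^ 2 :=
  stmt_9_general P ω C hint hint2 hunbiased hvar η hη0 hη1 xt xstar xn h xnstar havg hindep
end

section
/- Let f_1,…,f_n : ℝ^d → ℝ each be convex and L-smooth, let f = (1/n)Σ f_i, and let x_*, y ∈ ℝ^d with ∇f(x_*) = 0. Define σ̃² = (1/n) Σ_{i=1}^n ‖∇f_i(x_*) − ∇f_i(y) + ∇f(y) − ∇f(x_*)‖². Then σ̃² ≤ 8L·D_f(y, x_*) ≤ 4L²‖y − x_*‖², where D_f(y,x_*) = f(y) − f(x_*) − ⟨∇f(x_*), y − x_*⟩. -/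
open scoped RealInnerProductSpace

/-!
Write `aᵢ = ∇fᵢ(y) − ∇fᵢ(x_*)`, so that `∇f(y) − ∇f(x_*)` is their mean `ā` and the summands of
`σ̃²` are `‖aᵢ − ā‖²`. A variance is at most the corresponding second moment, and convexity plus
`L`-smoothness of `fᵢ` give `‖aᵢ‖² ≤ 2L·D_{fᵢ}(y, x_*)`; averaging, `σ̃² ≤ 2L·D_f(y, x_*)`, since
Bregman divergences are linear in the function. The second inequality is the smoothness upper
bound `D_{fᵢ}(y, x_*) ≤ L/2·‖y − x_*‖²`, averaged.
-/

open Finset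

section Variance

variable {ι E : Type*} [NormedAddCommGroup E] [InnerProductSpace ℝ E]

theorem sum_norm_sub_sq_le_sum_norm_sq (s : Finset ι) (a : ι → E) {b : E}
    (hb : ∑ i ∈ s, a i = (#s : ℝ) • b) :
    ∑ i ∈ s, ‖a i - b‖ ^ 2 ≤ ∑ i ∈ s, ‖a i‖ ^ 2 := by
  have hexpand : ∑ i ∈ s, ‖a i - b‖ ^ 2 = ∑ i ∈ s, ‖a i‖ ^ 2 - #s * ‖b‖ ^ 2 := by
    simp only [norm_sub_sq_real, sum_add_distrib, sum_sub_distrib, ← mul_sum, ← sum_inner, hb,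
      real_inner_smul_left, real_inner_self_eq_norm_sq, sum_const, nsmul_eq_mul]
    ring
  rw [hexpand]
  exact sub_le_self _ (by positivity)

end Variance

section Bregman

variable {E : Type*} [NormedAddCommGroup E] [InnerProductSpace ℝ E] [CompleteSpace E]

noncomputable def bregmanDiv (h : E → ℝ) (x y : E) : ℝ := h x - h y - ⟪gradient h y, x - y⟫

theorem bregmanDiv_nonneg {h : E → ℝ} (hd : Differentiable ℝ h)
    (hmono : ∀ a b, 0 ≤ ⟪gradient h a - gradient h b, a - b⟫) (x y : E) :
    0 ≤ bregmanDiv h x y := by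
  -- Mean value theorem along the segment from `y` to `x`; gradient monotonicity makes the slope
  -- at the intermediate point at least the slope at `y`.
  have hφ : ∀ t : ℝ, HasDerivAt (fun t : ℝ => h (y + t • (x - y)))
      ⟪gradient h (y + t • (x - y)), x - y⟫ t := by
    intro t
    have hline : HasDerivAt (fun t : ℝ => y + t • (x - y)) (x - y) t := by
      simpa using ((hasDerivAt_id t).smul_const (x - y)).const_add y
    have hcomp := (hd (y + t • (x - y))).hasGradientAt.hasFDerivAt.comp_hasDerivAt t hline
    rwa [InnerProductSpace.toDual_apply_apply] at hcomp
  obtain ⟨c, hc, hslope⟩ := exists_hasDerivAt_eq_slope _ _ one_pos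
    (fun t _ => (hφ t).continuousAt.continuousWithinAt) (fun t _ => hφ t)
  have hgrad_le : ⟪gradient h y, x - y⟫ ≤ ⟪gradient h (y + c • (x - y)), x - y⟫ := by
    have h0 := hmono (y + c • (x - y)) y
    rw [add_sub_cancel_left, real_inner_smul_right, mul_nonneg_iff_of_pos_left hc.1,
      inner_sub_left] at h0
    linarith
  simp only [zero_smul, add_zero, one_smul, add_sub_cancel, sub_zero, div_one] at hslope
  unfold bregmanDiv
  linarith

theorem norm_gradient_sub_sq_le_bregmanDiv {L : ℝ} (hL : 0 < L) {h : E → ℝ}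
    (hd : Differentiable ℝ h) (hmono : ∀ a b, 0 ≤ ⟪gradient h a - gradient h b, a - b⟫)
    (hsmooth : ∀ a b, h a ≤ h b + ⟪gradient h b, a - b⟫ + L / 2 * ‖a - b‖ ^ 2) (x y : E) :
    ‖gradient h x - gradient h y‖ ^ 2 ≤ 2 * L * bregmanDiv h x y := by
  set g := gradient h x - gradient h y
  -- Squeeze `h` at the gradient step `z = x − g/L` between the smoothness upper bound at `x`
  -- and the convexity lower bound at `y`.
  have hupper := hsmooth (x - L⁻¹ • g) x
  have hlower := bregmanDiv_nonneg hd hmono (x - L⁻¹ • g) y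
  have hg : ⟪gradient h x, g⟫ - ⟪gradient h y, g⟫ = ‖g‖ ^ 2 := by
    rw [← inner_sub_left, real_inner_self_eq_norm_sq]
  rw [sub_sub_cancel_left, inner_neg_right, norm_neg, norm_smul, real_inner_smul_right,
    Real.norm_of_nonneg (inv_nonneg.2 hL.le)] at hupper
  rw [bregmanDiv, sub_right_comm x, inner_sub_right, real_inner_smul_right] at hlower
  have key : ‖g‖ ^ 2 / (2 * L) ≤ bregmanDiv h x y := by
    unfold bregmanDiv
    have hquad : L / 2 * (L⁻¹ * ‖g‖) ^ 2 = ‖g‖ ^ 2 / (2 * L) := by field_simp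
    have hlin : L⁻¹ * ⟪gradient h x, g⟫ - L⁻¹ * ⟪gradient h y, g⟫ = 2 * (‖g‖ ^ 2 / (2 * L)) := by
      rw [← mul_sub, hg]; field_simp
    linarith
  rwa [div_le_iff₀' (by positivity)] at key

theorem hasGradientAt_const_mul_sum {ι : Type*} (s : Finset ι) (c : ℝ) {f : ι → E → ℝ} {x : E}
    (hf : ∀ i ∈ s, DifferentiableAt ℝ (f i) x) :
    HasGradientAt (fun x => c * ∑ i ∈ s, f i x) (c • ∑ i ∈ s, gradient (f i) x) x := by
  rw [hasGradientAt_iff_hasFDerivAt, map_smulₛₗ, map_sum, conj_trivial]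
  exact (HasFDerivAt.fun_sum fun i hi => (hf i hi).hasGradientAt.hasFDerivAt).const_mul c

theorem bregmanDiv_const_mul_sum {ι : Type*} (s : Finset ι) (c : ℝ) {f : ι → E → ℝ}
    (hf : ∀ i ∈ s, Differentiable ℝ (f i)) (x y : E) :
    bregmanDiv (fun x => c * ∑ i ∈ s, f i x) x y = c * ∑ i ∈ s, bregmanDiv (f i) x y := by
  rw [bregmanDiv, (hasGradientAt_const_mul_sum s c fun i hi => (hf i hi) y).gradient,
    real_inner_smul_left, sum_inner]
  simp only [bregmanDiv, sum_sub_distrib]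
  ring

end Bregman

theorem stmt_10_general {d n : ℕ} (hn : 0 < n) (L : ℝ) (hL : 0 < L)
    (f : Fin n → EuclideanSpace ℝ (Fin d) → ℝ)
    (hdiff : ∀ i, Differentiable ℝ (f i))
    (hconv : ∀ i x y, (0 : ℝ) ≤ ⟪gradient (f i) x - gradient (f i) y, x - y⟫)
    (hsmooth : ∀ i x y, f i x ≤ f i y + ⟪gradient (f i) y, x - y⟫ + L / 2 * ‖x - y‖ ^ 2)
    (F : EuclideanSpace ℝ (Fin d) → ℝ)
    (hF : F = fun x => (1 / (n : ℝ)) * ∑ i : Fin n, f i x)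
    (xstar y : EuclideanSpace ℝ (Fin d)) :
    (1 / (n : ℝ)) * ∑ i : Fin n,
        ‖gradient (f i) xstar - gradient (f i) y + gradient F y - gradient F xstar‖ ^ 2
      ≤ 8 * L * (F y - F xstar - ⟪gradient F xstar, y - xstar⟫) ∧
    8 * L * (F y - F xstar - ⟪gradient F xstar, y - xstar⟫)
      ≤ 4 * L ^ 2 * ‖y - xstar‖ ^ 2 := by
  have hgradF : ∀ x, gradient F x = (1 / (n : ℝ)) • ∑ i, gradient (f i) x := fun x => by
    rw [hF]
    exact (hasGradientAt_const_mul_sum _ _ fun i _ => (hdiff i).differentiableAt).gradient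
  have hbregF : bregmanDiv F y xstar = (1 / (n : ℝ)) * ∑ i, bregmanDiv (f i) y xstar := by
    rw [hF]
    exact bregmanDiv_const_mul_sum _ _ (fun i _ => hdiff i) y xstar
  set a := fun i => gradient (f i) y - gradient (f i) xstar
  have hmean : ∑ i, a i = (#(univ : Finset (Fin n)) : ℝ) • (gradient F y - gradient F xstar) := by
    rw [card_univ, Fintype.card_fin, hgradF, hgradF, ← smul_sub, ← sum_sub_distrib, smul_smul,
      mul_one_div_cancel (by positivity), one_smul]
  have hbregF_nonneg : 0 ≤ bregmanDiv F y xstar := by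
    rw [hbregF]
    exact mul_nonneg (by positivity)
      (sum_nonneg fun i _ => bregmanDiv_nonneg (hdiff i) (hconv i) y xstar)
  change _ ≤ 8 * L * bregmanDiv F y xstar ∧ 8 * L * bregmanDiv F y xstar ≤ _
  constructor
  · calc (1 / (n : ℝ)) * ∑ i : Fin n,
          ‖gradient (f i) xstar - gradient (f i) y + gradient F y - gradient F xstar‖ ^ 2
        = (1 / (n : ℝ)) * ∑ i, ‖a i - (gradient F y - gradient F xstar)‖ ^ 2 := by
          congr 1; refine sum_congr rfl fun i _ => ?_
          rw [← norm_neg]; congr 2; simp only [a]; abel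
      _ ≤ (1 / (n : ℝ)) * ∑ i, ‖a i‖ ^ 2 := by
          gcongr _ * ?_; exact sum_norm_sub_sq_le_sum_norm_sq _ a hmean
      _ ≤ (1 / (n : ℝ)) * ∑ i, 2 * L * bregmanDiv (f i) y xstar := by
          gcongr with i
          exact norm_gradient_sub_sq_le_bregmanDiv hL (hdiff i) (hconv i) (hsmooth i) y xstar
      _ = 2 * L * bregmanDiv F y xstar := by rw [hbregF, ← mul_sum]; ring
      _ ≤ 8 * L * bregmanDiv F y xstar := by nlinarith
  · have hbregF_le : bregmanDiv F y xstar ≤ L / 2 * ‖y - xstar‖ ^ 2 := by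
      rw [hbregF, one_div_mul_eq_div, div_le_iff₀' (by positivity)]
      refine (sum_le_card_nsmul univ _ (L / 2 * ‖y - xstar‖ ^ 2) fun i _ => ?_).trans (by simp)
      unfold bregmanDiv
      linarith [hsmooth i y xstar]
    linarith [mul_le_mul_of_nonneg_left hbregF_le (by positivity : (0 : ℝ) ≤ 8 * L)]

/-- Lemma 5: for convex `L`-smooth `f_i` with average `f`, `∇f(x_*) = 0`, the variance of the
perturbed reformulation satisfies
`σ̃² = (1/n)Σᵢ‖∇fᵢ(x_*) − ∇fᵢ(y) + ∇f(y) − ∇f(x_*)‖² ≤ 8L·D_f(y,x_*) ≤ 4L²‖y − x_*‖²`. -/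
theorem stmt_10 {d n : ℕ} (hn : 0 < n) (L : ℝ) (hL : 0 < L)
    (f : Fin n → EuclideanSpace ℝ (Fin d) → ℝ)
    (hdiff : ∀ i, Differentiable ℝ (f i))
    (hconv : ∀ i x y, (0 : ℝ) ≤ ⟪gradient (f i) x - gradient (f i) y, x - y⟫)
    (hsmooth : ∀ i x y, f i x ≤ f i y + ⟪gradient (f i) y, x - y⟫ + L / 2 * ‖x - y‖ ^ 2)
    (F : EuclideanSpace ℝ (Fin d) → ℝ)
    (hF : F = fun x => (1 / (n : ℝ)) * ∑ i : Fin n, f i x)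
    (xstar y : EuclideanSpace ℝ (Fin d))
    (hstat : gradient F xstar = 0) :
    (1 / (n : ℝ)) * ∑ i : Fin n,
        ‖gradient (f i) xstar - gradient (f i) y + gradient F y - gradient F xstar‖ ^ 2
      ≤ 8 * L * (F y - F xstar - ⟪gradient F xstar, y - xstar⟫) ∧
    8 * L * (F y - F xstar - ⟪gradient F xstar, y - xstar⟫)
      ≤ 4 * L ^ 2 * ‖y - xstar‖ ^ 2 :=
  stmt_10_general hn L hL f hdiff hconv hsmooth F hF xstar y
end

section
/- Let X_1,…,X_n ∈ ℝ^d be fixed vectors with mean X̄ = (1/n)Σ X_j, and let π be a uniformly random permutation of {1,…,n}. For 1 ≤ i ≤ n−1 let X̄_π = (1/i) Σ_{j=0}^{i−1} X_{π_j} be the average of the first i entries under π. Then E[‖X̄_π‖²] = ‖X̄‖² + (n−i)/(i(n−1)) · σ², where σ² = (1/n) Σ_{j=1}^n ‖X_j − X̄‖². -/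
/-!
Averaging over `π`, the expectation of `f (π j)` does not depend on `j`, and that of
`g (π j) (π k)` does not depend on the pair `j ≠ k`, since the permutation group is
2-transitive; averaging once more over `j`, resp. over the pairs, identifies them with the plain
average of `f`, resp. the average of `g` over the off-diagonal. Expanding
`‖∑ j ∈ P, X (π j)‖²` into `#P` squared norms and `#P (#P - 1)` cross inner products, the claim
reduces to `∑_{a ≠ b} ⟪X a, X b⟫ = ‖∑ a, X a‖² - ∑ a, ‖X a‖²` and the variance identity
`∑ a, ‖X a - X̄‖² = ∑ a, ‖X a‖² - n ‖X̄‖²`.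
-/

open Finset
open scoped BigOperators

namespace Equiv.Perm

variable {α M : Type*} [Fintype α] [DecidableEq α] [AddCommMonoid M] [Module ℚ≥0 M]

lemma expect_apply (f : α → M) (j : α) : 𝔼 π : Perm α, f (π j) = 𝔼 a, f a := by
  have : Nonempty α := ⟨j⟩
  have hconst (j' : α) : 𝔼 π : Perm α, f (π j') = 𝔼 π : Perm α, f (π j) :=
    Fintype.expect_equiv (Equiv.mulRight (swap j j')) _ _ fun π => by simp
  calc 𝔼 π : Perm α, f (π j) = 𝔼 j', 𝔼 π : Perm α, f (π j') := by
        simp only [hconst, Fintype.expect_const]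
    _ = 𝔼 π : Perm α, 𝔼 j', f (π j') := expect_comm ..
    _ = 𝔼 π : Perm α, 𝔼 a, f a :=
        expect_congr rfl fun π _ => Fintype.expect_equiv π _ f fun _ => rfl
    _ = 𝔼 a, f a := Fintype.expect_const _

lemma expect_apply_apply (g : α → α → M) {j k : α} (hjk : j ≠ k) :
    𝔼 π : Perm α, g (π j) (π k) = 𝔼 p ∈ univ.offDiag, g p.1 p.2 := by
  have hne : (univ.offDiag : Finset (α × α)).Nonempty := ⟨(j, k), by simpa using hjk⟩
  have hconst : ∀ p ∈ (univ.offDiag : Finset (α × α)),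
      𝔼 π : Perm α, g (π p.1) (π p.2) = 𝔼 π : Perm α, g (π j) (π k) := by
    intro p hp
    obtain ⟨τ, hτj, hτk⟩ := MulAction.is_two_pretransitive_iff.mp
      (isMultiplyPretransitive α 2) hjk (mem_offDiag.mp hp).2.2
    exact Fintype.expect_equiv (Equiv.mulRight τ) _ _ fun π => by
      simp [← hτj, ← hτk, Perm.smul_def]
  calc 𝔼 π : Perm α, g (π j) (π k) = 𝔼 p ∈ univ.offDiag, 𝔼 π : Perm α, g (π p.1) (π p.2) := by
        rw [expect_congr rfl hconst, expect_const hne]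
    _ = 𝔼 π : Perm α, 𝔼 p ∈ univ.offDiag, g (π p.1) (π p.2) := expect_comm ..
    _ = 𝔼 π : Perm α, 𝔼 p ∈ univ.offDiag, g p.1 p.2 :=
        expect_congr rfl fun π _ => expect_equiv (π.prodCongr π) (by simp) (by simp)
    _ = 𝔼 p ∈ univ.offDiag, g p.1 p.2 := Fintype.expect_const _

end Equiv.Perm

section InnerProductSpace

open scoped RealInnerProductSpace

variable {ι E : Type*} [NormedAddCommGroup E] [InnerProductSpace ℝ E]

lemma norm_sum_sq_eq_sum_norm_sq_add_sum_offDiag [DecidableEq ι] (s : Finset ι) (v : ι → E) :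
    ‖∑ j ∈ s, v j‖ ^ 2 = ∑ j ∈ s, ‖v j‖ ^ 2 + ∑ q ∈ s.offDiag, ⟪v q.1, v q.2⟫ := by
  rw [← real_inner_self_eq_norm_sq, sum_inner]
  simp_rw [inner_sum]
  rw [← sum_product', ← diag_union_offDiag, sum_union (disjoint_diag_offDiag _), sum_diag]
  simp_rw [real_inner_self_eq_norm_sq]

lemma sum_norm_sub_sq_of_sum_eq_card_smul (s : Finset ι) (X : ι → E) {μ : E}
    (hμ : ∑ a ∈ s, X a = (#s : ℝ) • μ) :
    ∑ a ∈ s, ‖X a - μ‖ ^ 2 = ∑ a ∈ s, ‖X a‖ ^ 2 - #s * ‖μ‖ ^ 2 := by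
  simp_rw [norm_sub_sq_real, sum_add_distrib, sum_sub_distrib, ← mul_sum, ← sum_inner, hμ,
    real_inner_smul_left, real_inner_self_eq_norm_sq, sum_const, nsmul_eq_mul]
  ring

variable {α : Type*} [Fintype α] [DecidableEq α]

lemma Equiv.Perm.expect_norm_sum_apply_sq (X : α → E) (P : Finset α) :
    𝔼 π : Perm α, ‖∑ j ∈ P, X (π j)‖ ^ 2 =
      #P * 𝔼 a, ‖X a‖ ^ 2 + #P * (#P - 1) * 𝔼 q ∈ univ.offDiag, ⟪X q.1, X q.2⟫ := by
  have hdiag : ∑ j ∈ P, 𝔼 π : Perm α, ‖X (π j)‖ ^ 2 = #P * 𝔼 a, ‖X a‖ ^ 2 := by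
    simp [Perm.expect_apply (fun a => ‖X a‖ ^ 2)]
  have hoff : ∑ q ∈ P.offDiag, 𝔼 π : Perm α, ⟪X (π q.1), X (π q.2)⟫ =
      #P * (#P - 1) * 𝔼 q ∈ univ.offDiag, ⟪X q.1, X q.2⟫ := by
    rw [sum_congr rfl fun q hq => Perm.expect_apply_apply (fun a b => ⟪X a, X b⟫)
      (mem_offDiag.mp hq).2.2, sum_const, offDiag_card, nsmul_eq_mul,
      Nat.cast_sub (Nat.le_mul_self _)]
    push_cast
    ring
  simp_rw [norm_sum_sq_eq_sum_norm_sq_add_sum_offDiag, expect_add_distrib, expect_sum_comm,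
    hdiag, hoff]

theorem Equiv.Perm.expect_norm_inv_card_smul_sum_apply_sq (X : α → E) {P : Finset α}
    (hP : P.Nonempty) (hα : 1 < Fintype.card α) {μ : E}
    (hμ : μ = (Fintype.card α : ℝ)⁻¹ • ∑ a, X a) :
    𝔼 π : Perm α, ‖(#P : ℝ)⁻¹ • ∑ j ∈ P, X (π j)‖ ^ 2 =
      ‖μ‖ ^ 2 + (Fintype.card α - #P) / (#P * (Fintype.card α - 1)) * 𝔼 a, ‖X a - μ‖ ^ 2 := by
  set n := Fintype.card α with hn_def
  have hn : (n : ℝ) ≠ 0 := by positivity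
  have hn1 : (n : ℝ) - 1 ≠ 0 := sub_ne_zero.mpr (by exact_mod_cast hα.ne')
  have hk : (#P : ℝ) ≠ 0 := by exact_mod_cast hP.card_pos.ne'
  have hsum : ∑ a, X a = (n : ℝ) • μ := by rw [hμ, smul_inv_smul₀ hn]
  have hvar : ∑ a, ‖X a - μ‖ ^ 2 = ∑ a, ‖X a‖ ^ 2 - n * ‖μ‖ ^ 2 :=
    sum_norm_sub_sq_of_sum_eq_card_smul univ X hsum
  have hcross : ∑ q ∈ univ.offDiag, ⟪X q.1, X q.2⟫ = n ^ 2 * ‖μ‖ ^ 2 - ∑ a, ‖X a‖ ^ 2 := by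
    have := norm_sum_sq_eq_sum_norm_sq_add_sum_offDiag univ X
    rw [hsum, norm_smul, mul_pow, Real.norm_natCast] at this
    linarith
  simp_rw [norm_smul, mul_pow, norm_inv, Real.norm_natCast, ← mul_expect,
    Perm.expect_norm_sum_apply_sq, expect_eq_sum_div_card, offDiag_card, card_univ, ← hn_def,
    hvar, hcross, Nat.cast_sub (Nat.le_mul_self _)]
  push_cast
  field_simp
  ring

end InnerProductSpace

theorem stmt_11_general {d n : ℕ} (X : Fin n → EuclideanSpace ℝ (Fin d))
    (Xbar : EuclideanSpace ℝ (Fin d)) (hXbar : Xbar = (1 / (n : ℝ)) • ∑ j : Fin n, X j)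
    (σ2 : ℝ) (hσ2 : σ2 = (1 / (n : ℝ)) * ∑ j : Fin n, ‖X j - Xbar‖ ^ 2)
    (i : ℕ) (hi1 : 1 ≤ i) (hi2 : i ≤ n - 1) :
    (1 / (n.factorial : ℝ)) * ∑ π : Equiv.Perm (Fin n),
        ‖(1 / (i : ℝ)) • ∑ j ∈ Finset.univ.filter (fun j : Fin n => (j : ℕ) < i), X (π j)‖ ^ 2
      = ‖Xbar‖ ^ 2 + (((n : ℝ) - i) / ((i : ℝ) * ((n : ℝ) - 1))) * σ2 := by
  have hP : #{j : Fin n | (j : ℕ) < i} = i := by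
    rw [Fin.card_filter_val_lt]; omega
  have key := Equiv.Perm.expect_norm_inv_card_smul_sum_apply_sq X
    (P := {j : Fin n | (j : ℕ) < i}) (card_pos.mp (by omega)) (by rw [Fintype.card_fin]; omega)
    (μ := Xbar) (by simpa [one_div] using hXbar)
  simp only [hP, Fintype.card_fin, Fintype.expect_eq_sum_div_card, Fintype.card_perm] at key
  rw [hσ2, one_div_mul_eq_div, one_div_mul_eq_div, one_div, key]

/-- Sampling-without-replacement variance (Lemma 1 of Mishchenko et al. 2020): for a uniformly
random permutation `π` of `{1,…,n}` and `1 ≤ i ≤ n−1`, the average `X̄_π` of the first `i`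
entries satisfies `E[‖X̄_π‖²] = ‖X̄‖² + (n−i)/(i(n−1))·σ²` where
`σ² = (1/n)Σⱼ‖Xⱼ − X̄‖²`. -/
theorem stmt_11 {d n : ℕ} (X : Fin n → EuclideanSpace ℝ (Fin d))
    (Xbar : EuclideanSpace ℝ (Fin d)) (hXbar : Xbar = (1 / (n : ℝ)) • ∑ j : Fin n, X j)
    (σ2 : ℝ) (hσ2 : σ2 = (1 / (n : ℝ)) * ∑ j : Fin n, ‖X j - Xbar‖ ^ 2)
    (i : ℕ) (hi1 : 1 ≤ i) (hi2 : i ≤ n - 1) (hn : 2 ≤ n) :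
    (1 / (n.factorial : ℝ)) * ∑ π : Equiv.Perm (Fin n),
        ‖(1 / (i : ℝ)) • ∑ j ∈ Finset.univ.filter (fun j : Fin n => (j : ℕ) < i), X (π j)‖ ^ 2
      = ‖Xbar‖ ^ 2 + (((n : ℝ) - i) / ((i : ℝ) * ((n : ℝ) - 1))) * σ2 :=
  stmt_11_general X Xbar hXbar σ2 hσ2 i hi1 hi2
end

section
/- Let f_1,…,f_n : ℝ^d → ℝ be L-smooth with L ≤ L_max, let f = (1/n)Σ f_i, let x_* ∈ ℝ^d, γ > 0, and let π be a uniformly random permutation of {1,…,n}. Define x_*^i = x_* − γ Σ_{j=0}^{i−1} ∇f_{π_j}(x_*) for i = 1,…,n−1, the shuffling radius σ²_rad = max_{1≤i≤n−1} (1/γ²) E_π[D_{f_{π_i}}(x_*^i, x_*)], and σ_*² = (1/n) Σ_i ‖∇f_i(x_*) − ∇f(x_*)‖². Then σ²_rad ≤ (L_max/2) · n · (n‖∇f(x_*)‖² + σ_*²/2). -/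
open scoped RealInnerProductSpace BigOperators
open Finset Equiv Nat

/-!
Smoothness bounds each Bregman divergence by `(L_max/2)‖x_*^i - x_*‖²
= (L_max/2) γ² ‖∑_{j<i} ∇f_{π_j}(x_*)‖²`. Averaged over `π`, this squared norm is the second
moment of a sum of `i` gradients sampled without replacement: `σ ↦ σ j` is uniform on points and
`σ ↦ (σ j, σ k)` on ordered pairs of distinct points, because neither average depends on the
positions `j`, `k`. This gives `i² ‖∇f(x_*)‖² + i(n-i)/(n-1) σ_*²`, and `i ≤ n`,
`i(n-i) ≤ n(n-1)/2` finish the bound.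
-/

section Permutations

variable {α : Type*} [DecidableEq α]

theorem exists_perm_apply_eq_and_apply_eq {j k j' k' : α} (h : j ≠ k) (h' : j' ≠ k') :
    ∃ τ : Perm α, τ j' = j ∧ τ k' = k := by
  have h_ne : j ≠ swap j' j k' := by
    intro hj
    apply h'
    apply (swap j' j).injective
    rw [swap_apply_left, ← hj]
  exact ⟨swap (swap j' j k') k * swap j' j, by simp [swap_apply_of_ne_of_ne h_ne h], by simp⟩

variable [Fintype α] {M : Type*} [AddCommMonoid M]

theorem card_smul_sum_perm_apply (g : α → M) (j : α) :
    Fintype.card α • ∑ σ : Perm α, g (σ j) = (Fintype.card α)! • ∑ a, g a := by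
  have h_indep : ∀ k, ∑ σ : Perm α, g (σ k) = ∑ σ : Perm α, g (σ j) := fun k => by
    rw [← Equiv.sum_comp (Equiv.mulRight (swap j k))]
    simp [Perm.mul_apply]
  calc Fintype.card α • ∑ σ : Perm α, g (σ j)
      = ∑ k : α, ∑ σ : Perm α, g (σ k) := by simp [h_indep]
    _ = ∑ σ : Perm α, ∑ k, g (σ k) := Finset.sum_comm
    _ = ∑ σ : Perm α, ∑ a, g a := by simp only [Equiv.sum_comp]
    _ = (Fintype.card α)! • ∑ a, g a := by simp [Fintype.card_perm]

theorem card_mul_pred_smul_sum_perm_apply_apply (g : α → α → M) {j k : α} (hjk : j ≠ k) :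
    (Fintype.card α * (Fintype.card α - 1)) • ∑ σ : Perm α, g (σ j) (σ k)
      = (Fintype.card α)! • ∑ a, ∑ b ∈ univ.erase a, g a b := by
  have h_indep : ∀ j', ∀ k' ∈ univ.erase j',
      ∑ σ : Perm α, g (σ j') (σ k') = ∑ σ : Perm α, g (σ j) (σ k) := fun j' k' hk' => by
    obtain ⟨τ, hj, hk⟩ := exists_perm_apply_eq_and_apply_eq hjk (mem_erase.1 hk').1.symm
    rw [← Equiv.sum_comp (Equiv.mulRight τ)]
    simp [Perm.mul_apply, hj, hk]
  have h_reindex : ∀ (σ : Perm α) (a : α),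
      ∑ b ∈ univ.erase a, g (σ a) (σ b) = ∑ b ∈ univ.erase (σ a), g (σ a) b := fun σ a =>
    Finset.sum_equiv σ (by simp [σ.injective.eq_iff]) (by simp)
  calc (Fintype.card α * (Fintype.card α - 1)) • ∑ σ : Perm α, g (σ j) (σ k)
      = ∑ j' : α, ∑ k' ∈ univ.erase j', ∑ σ : Perm α, g (σ j') (σ k') := by
        simp [sum_congr rfl (fun j' _ => sum_congr rfl (h_indep j')), card_erase_of_mem,
          mul_smul]
    _ = ∑ σ : Perm α, ∑ a, ∑ b ∈ univ.erase a, g (σ a) (σ b) := by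
        simp only [Finset.sum_comm (s := univ (α := Perm α))]
    _ = ∑ σ : Perm α, ∑ a, ∑ b ∈ univ.erase a, g a b := by
        simp only [h_reindex]
        exact sum_congr rfl fun σ _ => Equiv.sum_comp σ (fun a => ∑ b ∈ univ.erase a, g a b)
    _ = (Fintype.card α)! • ∑ a, ∑ b ∈ univ.erase a, g a b := by simp [Fintype.card_perm]

end Permutations

section InnerProduct

variable {α E : Type*} [NormedAddCommGroup E] [InnerProductSpace ℝ E]

theorem norm_sum_sq_eq_sum_norm_sq_add_sum_inner [DecidableEq α] (s : Finset α) (X : α → E) :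
    ‖∑ a ∈ s, X a‖ ^ 2 = ∑ a ∈ s, ‖X a‖ ^ 2 + ∑ a ∈ s, ∑ b ∈ s.erase a, ⟪X a, X b⟫ := by
  rw [← real_inner_self_eq_norm_sq, sum_inner, ← sum_add_distrib]
  refine sum_congr rfl fun a ha => ?_
  rw [inner_sum, ← add_sum_erase s _ ha, real_inner_self_eq_norm_sq]

theorem sum_norm_sub_sq_eq_sum_norm_sq_sub [Fintype α] (X : α → E) {g : E}
    (hg : ∑ a, X a = (Fintype.card α : ℝ) • g) :
    ∑ a, ‖X a - g‖ ^ 2 = ∑ a, ‖X a‖ ^ 2 - Fintype.card α * ‖g‖ ^ 2 := by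
  simp only [norm_sub_sq_real, sum_add_distrib, sum_sub_distrib, ← mul_sum, ← sum_inner, hg,
    real_inner_smul_left, real_inner_self_eq_norm_sq, sum_const, Finset.card_univ, nsmul_eq_mul]
  ring

theorem sum_perm_norm_sum_sq [Fintype α] [DecidableEq α] (X : α → E) (S : Finset α) :
    (Fintype.card α : ℝ) * (Fintype.card α - 1) * ∑ σ : Perm α, ‖∑ j ∈ S, X (σ j)‖ ^ 2
      = (Fintype.card α)! * (#S * (Fintype.card α - #S) * ∑ a, ‖X a‖ ^ 2
          + #S * (#S - 1) * ‖∑ a, X a‖ ^ 2) := by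
  set N : ℝ := (Fintype.card α : ℝ)
  have h_diag : ∀ j : α, N * ∑ σ : Perm α, ‖X (σ j)‖ ^ 2 = (Fintype.card α)! * ∑ a, ‖X a‖ ^ 2 :=
    fun j => by simpa [nsmul_eq_mul] using card_smul_sum_perm_apply (fun a => ‖X a‖ ^ 2) j
  have h_off : ∀ j, ∀ k ∈ S.erase j, N * (N - 1) * ∑ σ : Perm α, ⟪X (σ j), X (σ k)⟫
      = (Fintype.card α)! * (‖∑ a, X a‖ ^ 2 - ∑ a, ‖X a‖ ^ 2) := fun j k hk => by
    have h := card_mul_pred_smul_sum_perm_apply_apply (fun a b => ⟪X a, X b⟫)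
      (mem_erase.1 hk).1.symm
    have h_pos : 1 ≤ Fintype.card α := Fintype.card_pos_iff.2 ⟨j⟩
    rw [norm_sum_sq_eq_sum_norm_sq_add_sum_inner univ X, add_sub_cancel_left]
    simpa [nsmul_eq_mul, Nat.cast_sub h_pos, N] using h
  calc N * (N - 1) * ∑ σ : Perm α, ‖∑ j ∈ S, X (σ j)‖ ^ 2
      = ∑ j ∈ S, (N - 1) * (N * ∑ σ : Perm α, ‖X (σ j)‖ ^ 2)
        + ∑ j ∈ S, ∑ k ∈ S.erase j, N * (N - 1) * ∑ σ : Perm α, ⟪X (σ j), X (σ k)⟫ := by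
        rw [sum_congr rfl fun σ _ => norm_sum_sq_eq_sum_norm_sq_add_sum_inner S _,
          sum_add_distrib, sum_comm, sum_comm (s := univ)]
        simp only [sum_comm (s := univ (α := Perm α)) (t := S.erase _), mul_add, mul_sum]
        congr 1
        exact sum_congr rfl fun _ _ => sum_congr rfl fun _ _ => by ring
    _ = (Fintype.card α)! * (#S * (Fintype.card α - #S) * ∑ a, ‖X a‖ ^ 2
          + #S * (#S - 1) * ‖∑ a, X a‖ ^ 2) := by
        have h_off_sum : ∀ j ∈ S,
            ∑ k ∈ S.erase j, N * (N - 1) * ∑ σ : Perm α, ⟪X (σ j), X (σ k)⟫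
              = (#S - 1) * ((Fintype.card α)! * (‖∑ a, X a‖ ^ 2 - ∑ a, ‖X a‖ ^ 2)) :=
          fun j hj => by
          rw [sum_congr rfl (h_off j), sum_const, nsmul_eq_mul, cast_card_erase_of_mem hj]
        simp only [h_diag, sum_congr rfl h_off_sum, sum_const, nsmul_eq_mul]
        ring

theorem inv_factorial_mul_sum_perm_norm_sum_sq [Fintype α] [DecidableEq α]
    (hα : 2 ≤ Fintype.card α) (X : α → E) (S : Finset α) {g : E}
    (hg : ∑ a, X a = (Fintype.card α : ℝ) • g) :
    1 / ((Fintype.card α)! : ℝ) * ∑ σ : Perm α, ‖∑ j ∈ S, X (σ j)‖ ^ 2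
      = #S ^ 2 * ‖g‖ ^ 2 + #S * (Fintype.card α - #S) / (Fintype.card α - 1)
          * (1 / (Fintype.card α : ℝ) * ∑ a, ‖X a - g‖ ^ 2) := by
  have h_pred : (Fintype.card α : ℝ) - 1 ≠ 0 := by
    have : (2 : ℝ) ≤ Fintype.card α := by exact_mod_cast hα
    linarith
  have h_sum := sum_perm_norm_sum_sq X S
  rw [hg, norm_smul, Real.norm_natCast] at h_sum
  rw [sum_norm_sub_sq_eq_sum_norm_sq_sub X hg]
  field_simp
  linear_combination h_sum

end InnerProduct

theorem mul_sub_div_sub_one_le_half {i N : ℝ} (h1 : 1 ≤ i) (h2 : i ≤ N - 1) :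
    i * (N - i) / (N - 1) ≤ N / 2 := by
  rw [div_le_div_iff₀ (by linarith) two_pos]
  nlinarith

theorem stmt_12_general {d n : ℕ} (hn : 2 ≤ n) (Lmax γ : ℝ) (hγ : 0 < γ) (hL : 0 < Lmax)
    (f : Fin n → EuclideanSpace ℝ (Fin d) → ℝ)
    (hsmooth : ∀ i x y, f i x - f i y - ⟪gradient (f i) y, x - y⟫ ≤ Lmax / 2 * ‖x - y‖ ^ 2)
    (xstar gbar : EuclideanSpace ℝ (Fin d))
    (hgbar : gbar = (1 / (n : ℝ)) • ∑ i : Fin n, gradient (f i) xstar)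
    (σstar2 : ℝ)
    (hσ : σstar2 = (1 / (n : ℝ)) * ∑ i : Fin n, ‖gradient (f i) xstar - gbar‖ ^ 2) :
    ∀ (i : ℕ) (hi : i < n), 1 ≤ i → i ≤ n - 1 →
      (1 / γ ^ 2) * ((1 / (n.factorial : ℝ)) * ∑ π : Equiv.Perm (Fin n),
        (f (π ⟨i, hi⟩)
            (xstar - γ • ∑ j ∈ Finset.univ.filter (fun j : Fin n => (j : ℕ) < i),
              gradient (f (π j)) xstar)
          - f (π ⟨i, hi⟩) xstar
          - ⟪gradient (f (π ⟨i, hi⟩)) xstar,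
              (xstar - γ • ∑ j ∈ Finset.univ.filter (fun j : Fin n => (j : ℕ) < i),
                gradient (f (π j)) xstar) - xstar⟫))
      ≤ (Lmax / 2) * n * ((n : ℝ) * ‖gbar‖ ^ 2 + σstar2 / 2) := by
  intro i hi h1 _
  set S : Finset (Fin n) := univ.filter (fun j : Fin n => (j : ℕ) < i)
  have hS : #S = i := by simp [S, Fin.card_filter_val_lt, hi.le]
  have h_step : ∀ v : EuclideanSpace ℝ (Fin d), ‖xstar - γ • v - xstar‖ ^ 2 = γ ^ 2 * ‖v‖ ^ 2 :=
    fun v => by rw [sub_sub_cancel_left, norm_neg, norm_smul, mul_pow, Real.norm_eq_abs, sq_abs]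
  have h_mean : ∑ a, gradient (f a) xstar = (Fintype.card (Fin n) : ℝ) • gbar := by
    rw [hgbar, Fintype.card_fin, smul_smul, mul_one_div_cancel (by positivity), one_smul]
  have hσ_nonneg : 0 ≤ σstar2 := by rw [hσ]; positivity
  have hi_one : (1 : ℝ) ≤ i := by exact_mod_cast h1
  have hi_le : (i : ℝ) ≤ n - 1 := le_sub_iff_add_le.2 (by exact_mod_cast hi)
  calc _ ≤ 1 / γ ^ 2 * (1 / (n ! : ℝ) * ∑ π : Perm (Fin n),
        Lmax / 2 * ‖xstar - γ • ∑ j ∈ S, gradient (f (π j)) xstar - xstar‖ ^ 2) := by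
        gcongr with π; exact hsmooth _ _ _
    _ = Lmax / 2 * (1 / ((Fintype.card (Fin n))! : ℝ) * ∑ π : Perm (Fin n),
        ‖∑ j ∈ S, gradient (f (π j)) xstar‖ ^ 2) := by
        simp only [h_step, mul_left_comm _ (γ ^ 2), ← mul_sum, Fintype.card_fin]
        field_simp
    _ = Lmax / 2 * (i ^ 2 * ‖gbar‖ ^ 2 + i * (n - i) / (n - 1) * σstar2) := by
        rw [inv_factorial_mul_sum_perm_norm_sum_sq (by simpa using hn) _ S h_mean, hS, hσ,
          Fintype.card_fin]
    _ ≤ Lmax / 2 * (n ^ 2 * ‖gbar‖ ^ 2 + n / 2 * σstar2) := by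
        gcongr ?_ * (?_ ^ 2 * _ + ?_ * _)
        · linarith
        · exact mul_sub_div_sub_one_le_half hi_one hi_le
    _ = Lmax / 2 * n * (n * ‖gbar‖ ^ 2 + σstar2 / 2) := by ring

/-- Theorem 1 (shuffling radius bound): for `L_max`-smooth `f_1,…,f_n`, any stepsize `γ > 0`
and uniformly random permutation `π`, each quantity
`(1/γ²)·E_π[D_{f_{π_i}}(x_*^i, x_*)]` (for `1 ≤ i ≤ n−1`), hence the shuffling radius,
is at most `(L_max/2)·n·(n‖∇f(x_*)‖² + σ_*²/2)`. -/
theorem stmt_12 {d n : ℕ} (hn : 2 ≤ n) (Lmax γ : ℝ) (hγ : 0 < γ) (hL : 0 < Lmax)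
    (f : Fin n → EuclideanSpace ℝ (Fin d) → ℝ)
    (hdiff : ∀ i, Differentiable ℝ (f i))
    (hsmooth : ∀ i x y, f i x - f i y - ⟪gradient (f i) y, x - y⟫ ≤ Lmax / 2 * ‖x - y‖ ^ 2)
    (xstar gbar : EuclideanSpace ℝ (Fin d))
    (hgbar : gbar = (1 / (n : ℝ)) • ∑ i : Fin n, gradient (f i) xstar)
    (σstar2 : ℝ)
    (hσ : σstar2 = (1 / (n : ℝ)) * ∑ i : Fin n, ‖gradient (f i) xstar - gbar‖ ^ 2) :
    ∀ (i : ℕ) (hi : i < n), 1 ≤ i → i ≤ n - 1 →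
      (1 / γ ^ 2) * ((1 / (n.factorial : ℝ)) * ∑ π : Equiv.Perm (Fin n),
        (f (π ⟨i, hi⟩)
            (xstar - γ • ∑ j ∈ Finset.univ.filter (fun j : Fin n => (j : ℕ) < i),
              gradient (f (π j)) xstar)
          - f (π ⟨i, hi⟩) xstar
          - ⟪gradient (f (π ⟨i, hi⟩)) xstar,
              (xstar - γ • ∑ j ∈ Finset.univ.filter (fun j : Fin n => (j : ℕ) < i),
                gradient (f (π j)) xstar) - xstar⟫))
      ≤ (Lmax / 2) * n * ((n : ℝ) * ‖gbar‖ ^ 2 + σstar2 / 2) :=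
  stmt_12_general hn Lmax γ hγ hL f hsmooth xstar gbar hgbar σstar2 hσ
end
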